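/- arXiv:1905.02408 — 2 statements merged into one kernel-verified Lean document; each statement's English description precedes it below -/
import Mathlib

section
/- With z(t,x;b,y) = ((t-b)^2-(y-x)^2)/((t+b+2)^2-(y-x)^2) and t > -1, the identity (∂z/∂t)^2 - (∂z/∂x)^2 = 4(1+b) z(1-z) / ((1+t)((t+b+2)^2-(y-x)^2)) holds wherever the denominator is nonzero. -/
noncomputable def zfun (t x b y : ℝ) : ℝ :=
  ((t - b)^2 - (y - x)^2) / ((t + b + 2)^2 - (y - x)^2)

/-!
Write `a = t - b`, `c = t + b + 2`, `w = y - x`, so that `z = N / D` with `N = a² - w²` and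
`D = c² - w²`. Since `c - a = 2(1 + b)` and `D - N = 4(1 + t)(1 + b)`, the quotient rule gives
`∂z/∂t = 4(1 + b)(ac + w²) / D²` and `∂z/∂x = 8(1 + t)(1 + b) w / D²`, and `a + c = 2(1 + t)`.
The identity then reduces to `(ac + w²)² - w²(a + c)² = (a² - w²)(c² - w²) = N D` together with
`1 - z = (D - N) / D = 4(1 + t)(1 + b) / D`.
-/

theorem hasDerivAt_zfun_fst (t x b y : ℝ) (hD : (t + b + 2)^2 - (y - x)^2 ≠ 0) :
    HasDerivAt (fun t' => zfun t' x b y)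
      (4 * (1 + b) * ((t - b) * (t + b + 2) + (y - x)^2) / ((t + b + 2)^2 - (y - x)^2)^2) t := by
  have hN : HasDerivAt (fun t' : ℝ => (t' - b)^2 - (y - x)^2) (2 * (t - b)) t := by
    simpa using (((hasDerivAt_id t).sub_const b).pow 2).sub_const ((y - x)^2)
  have hD' : HasDerivAt (fun t' : ℝ => (t' + b + 2)^2 - (y - x)^2) (2 * (t + b + 2)) t := by
    simpa using ((((hasDerivAt_id t).add_const b).add_const 2).pow 2).sub_const ((y - x)^2)
  refine (hN.div hD' hD).congr_deriv ?_
  field_simp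
  ring

theorem hasDerivAt_zfun_snd (t x b y : ℝ) (hD : (t + b + 2)^2 - (y - x)^2 ≠ 0) :
    HasDerivAt (fun x' => zfun t x' b y)
      (8 * (1 + t) * (1 + b) * (y - x) / ((t + b + 2)^2 - (y - x)^2)^2) x := by
  have hw : HasDerivAt (fun x' : ℝ => (y - x')^2) (-(2 * (y - x))) x := by
    simpa using ((hasDerivAt_id x).const_sub y).fun_pow 2
  refine ((hw.const_sub ((t - b)^2)).div (hw.const_sub ((t + b + 2)^2)) hD).congr_deriv ?_
  field_simp
  ring

theorem one_sub_zfun (t x b y : ℝ) (hD : (t + b + 2)^2 - (y - x)^2 ≠ 0) :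
    1 - zfun t x b y = 4 * (1 + t) * (1 + b) / ((t + b + 2)^2 - (y - x)^2) := by
  rw [zfun]
  field_simp
  ring

theorem deriv_sq_diff_z (t x b y : ℝ) (hD : (t + b + 2)^2 - (y - x)^2 ≠ 0) (ht : -1 < t) :
    (deriv (fun t' => zfun t' x b y) t)^2 - (deriv (fun x' => zfun t x' b y) x)^2
      = 4 * (1 + b) * (zfun t x b y * (1 - zfun t x b y))
          / ((1 + t) * ((t + b + 2)^2 - (y - x)^2)) := by
  have ht' : 1 + t ≠ 0 := by linarith
  rw [(hasDerivAt_zfun_fst t x b y hD).deriv, (hasDerivAt_zfun_snd t x b y hD).deriv,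
    one_sub_zfun t x b y hD, zfun]
  field_simp
  ring
end

section
/- On the characteristics y = x ± (t−b) with 0 ≤ b ≤ t, the combination 2·∂E/∂b ∓ 2·∂E/∂y − (μ/(1+b))·E vanishes identically: [2∂E/∂b ∓ 2∂E/∂y − (μ/(1+b))E](t,x;b,x±(t−b)) = 0. -/
noncomputable def hyp (a b c z : ℝ) : ℝ :=
  ∑' n : ℕ, (∏ i ∈ Finset.range n, ((a + (i : ℝ)) * (b + (i : ℝ)) / ((c + (i : ℝ)) * ((i : ℝ) + 1)))) * z ^ n

noncomputable def Ker (μ ν2 t x b y : ℝ) : ℝ :=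
  (1 + t) ^ (-μ/2 + (1 - Real.sqrt ((μ - 1)^2 - 4*ν2))/2) *
  (1 + b) ^ (μ/2 + (1 - Real.sqrt ((μ - 1)^2 - 4*ν2))/2) *
  (((t + b + 2)^2 - (y - x)^2) ^ ((Real.sqrt ((μ - 1)^2 - 4*ν2) - 1)/2)) *
  hyp ((1 - Real.sqrt ((μ - 1)^2 - 4*ν2))/2) ((1 - Real.sqrt ((μ - 1)^2 - 4*ν2))/2) 1 (zfun t x b y)

/-!
On a characteristic `y = x ± (t - b)` one has `z = 0` and
`(t + b + 2)² - (y - x)² = 4 (1 + t) (1 + b)`, so there `E = 4^(-a) (1 + t)^(-μ/2) (1 + b)^(μ/2)`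
with `a = (1 - √δ)/2`: the powers `(1 + b)^(±a)` cancel. Since `E` is differentiable in `(b, y)`
(`₂F₁` is analytic at `0`), the operator `2∂_b ∓ 2∂_y` is twice the derivative along the
characteristic, and `2 d/db (1 + b)^(μ/2) = μ/(1 + b) (1 + b)^(μ/2)`.
-/

section Hypergeometric

variable {𝕂 : Type*} (𝔸 : Type*) [RCLike 𝕂] [NormedDivisionRing 𝔸] [NormedAlgebra 𝕂 𝔸]
  (a b c : 𝕂)

theorem ordinaryHypergeometricSeries_radius_pos :
    0 < (ordinaryHypergeometricSeries 𝔸 a b c).radius := by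
  by_cases h : ∃ k : ℕ, (k : 𝕂) = -a ∨ (k : 𝕂) = -b ∨ (k : 𝕂) = -c
  · obtain ⟨k, hk | hk | hk⟩ := h
    · obtain rfl : a = -k := by rw [hk, neg_neg]
      simp [ordinaryHypergeometric_radius_top_of_neg_nat₁]
    · obtain rfl : b = -k := by rw [hk, neg_neg]
      simp [ordinaryHypergeometric_radius_top_of_neg_nat₂]
    · obtain rfl : c = -k := by rw [hk, neg_neg]
      simp [ordinaryHypergeometric_radius_top_of_neg_nat₃]
  · push Not at h
    simp [ordinaryHypergeometricSeries_radius_eq_one 𝔸 a b c h]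

variable {𝔸}

theorem analyticAt_ordinaryHypergeometric_zero [CompleteSpace 𝔸] :
    AnalyticAt 𝕂 (₂F₁ a b c : 𝔸 → 𝔸) 0 :=
  ((ordinaryHypergeometricSeries 𝔸 a b c).hasFPowerSeriesOnBall
    (ordinaryHypergeometricSeries_radius_pos 𝔸 a b c)).analyticAt

end Hypergeometric

-- Also valid when some `c + i` vanishes: then both sides are `0` by `0⁻¹ = 0`.
theorem prod_range_eq_ordinaryHypergeometricCoefficient {𝕂 : Type*} [Field 𝕂] [CharZero 𝕂]
    (a b c : 𝕂) (n : ℕ) :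
    ∏ i ∈ Finset.range n, (a + i) * (b + i) / ((c + i) * (i + 1)) =
      ordinaryHypergeometricCoefficient a b c n := by
  induction n with
  | zero => simp [ordinaryHypergeometricCoefficient]
  | succ n ih =>
    rw [Finset.prod_range_succ, ih, ordinaryHypergeometricCoefficient,
      ordinaryHypergeometricCoefficient, ascPochhammer_succ_eval, ascPochhammer_succ_eval,
      ascPochhammer_succ_eval, Nat.factorial_succ]
    push_cast
    simp only [div_eq_mul_inv, mul_inv]
    ring

theorem hyp_eq_ordinaryHypergeometric (a b c : ℝ) : hyp a b c = ₂F₁ a b c := by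
  funext z
  rw [hyp, ordinaryHypergeometric, ordinaryHypergeometric_sum_eq]
  simp_rw [prod_range_eq_ordinaryHypergeometricCoefficient, smul_eq_mul]

theorem deriv_comp_line_eq {E : Type*} [NormedAddCommGroup E] [NormedSpace ℝ E]
    {f : ℝ × ℝ → E} {u v : ℝ} (c : ℝ) (hf : DifferentiableAt ℝ f (u, v)) :
    deriv (fun s => f (s, v + c * (s - u))) u =
      deriv (fun u' => f (u', v)) u + c • deriv (fun v' => f (u, v')) v := by
  have hline : HasDerivAt (fun s : ℝ => (s, v + c * (s - u))) (1, c) u := by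
    refine (hasDerivAt_id u).prodMk ?_
    simpa using ((hasDerivAt_id u).sub_const u).const_mul c |>.const_add v
  have h1 : HasDerivAt (fun u' : ℝ => (u', v)) (1, 0) u :=
    (hasDerivAt_id u).prodMk (hasDerivAt_const u v)
  have h2 : HasDerivAt (fun v' : ℝ => (u, v')) (0, 1) v :=
    (hasDerivAt_const v u).prodMk (hasDerivAt_id v)
  have hf' := hf.hasFDerivAt
  have hd : HasDerivAt (fun s => f (s, v + c * (s - u))) (fderiv ℝ f (u, v) (1, c)) u :=
    hf'.comp_hasDerivAt_of_eq u hline (by simp)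
  have hd1 : HasDerivAt (fun u' => f (u', v)) (fderiv ℝ f (u, v) (1, 0)) u :=
    hf'.comp_hasDerivAt_of_eq u h1 rfl
  have hd2 : HasDerivAt (fun v' => f (u, v')) (fderiv ℝ f (u, v) (0, 1)) v :=
    hf'.comp_hasDerivAt_of_eq v h2 rfl
  rw [hd.deriv, hd1.deriv, hd2.deriv, ← map_smul, ← map_add]
  simp

open Filter Topology

section Kernel

variable (μ ν2 : ℝ) {t x b y : ℝ}

theorem zfun_eq_zero (hy : (y - x) ^ 2 = (t - b) ^ 2) : zfun t x b y = 0 := by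
  rw [zfun, hy, sub_self, zero_div]

theorem sq_sub_sq_eq_of_characteristic (hy : (y - x) ^ 2 = (t - b) ^ 2) :
    (t + b + 2) ^ 2 - (y - x) ^ 2 = 4 * ((1 + t) * (1 + b)) := by
  rw [hy]; ring

theorem differentiableAt_Ker (hb : -1 < b) (ht : -1 < t) (hy : (y - x) ^ 2 = (t - b) ^ 2) :
    DifferentiableAt ℝ (fun p : ℝ × ℝ => Ker μ ν2 t x p.1 p.2) (b, y) := by
  have h1b : 0 < 1 + b := by linarith
  have hQ : (t + b + 2) ^ 2 - (y - x) ^ 2 ≠ 0 := by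
    rw [sq_sub_sq_eq_of_characteristic hy]
    have : 0 < 1 + t := by linarith
    positivity
  have hz : DifferentiableAt ℝ (fun p : ℝ × ℝ => zfun t x p.1 p.2) (b, y) := by
    unfold zfun; fun_prop (disch := exact hQ)
  have hF (a : ℝ) : DifferentiableAt ℝ (fun p : ℝ × ℝ => hyp a a 1 (zfun t x p.1 p.2)) (b, y) := by
    rw [hyp_eq_ordinaryHypergeometric]
    refine DifferentiableAt.comp (b, y) ?_ hz
    rw [zfun_eq_zero hy]
    exact (analyticAt_ordinaryHypergeometric_zero a a 1).differentiableAt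
  unfold Ker
  refine (((differentiableAt_const _).mul ?_).mul ?_).mul (hF _)
  · exact (differentiableAt_fst.const_add 1).rpow_const (Or.inl h1b.ne')
  · exact (DifferentiableAt.rpow_const (by fun_prop) (Or.inl hQ))

theorem Ker_of_characteristic (hb : -1 < b) (ht : -1 < t) (hy : (y - x) ^ 2 = (t - b) ^ 2) :
    Ker μ ν2 t x b y =
      4 ^ ((√((μ - 1) ^ 2 - 4 * ν2) - 1) / 2) * (1 + t) ^ (-μ / 2) * (1 + b) ^ (μ / 2) := by
  have h1b : 0 < 1 + b := by linarith
  have h1t : 0 < 1 + t := by linarith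
  rw [Ker, zfun_eq_zero hy, hyp_eq_ordinaryHypergeometric, ordinaryHypergeometric_zero, mul_one,
    sq_sub_sq_eq_of_characteristic hy, Real.mul_rpow (by norm_num) (by positivity),
    Real.mul_rpow h1t.le h1b.le, Real.rpow_add h1t, Real.rpow_add h1b]
  set r := √((μ - 1) ^ 2 - 4 * ν2)
  rw [show (r - 1) / 2 = -((1 - r) / 2) by ring, Real.rpow_neg h1t.le, Real.rpow_neg h1b.le]
  field_simp

theorem Ker_transport_eq_zero (ε : ℝ) (hε : ε ^ 2 = 1) (hb : -1 < b) (ht : -1 < t) :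
    2 * deriv (fun b' => Ker μ ν2 t x b' (x + ε * (t - b))) b
        - 2 * ε * deriv (fun y' => Ker μ ν2 t x b y') (x + ε * (t - b))
        - μ / (1 + b) * Ker μ ν2 t x b (x + ε * (t - b)) = 0 := by
  have h1b : 0 < 1 + b := by linarith
  have hchar (s : ℝ) : (x + ε * (t - s) - x) ^ 2 = (t - s) ^ 2 := by
    linear_combination (t - s) ^ 2 * hε
  rw [Ker_of_characteristic μ ν2 hb ht (hchar b)]
  set C := 4 ^ ((√((μ - 1) ^ 2 - 4 * ν2) - 1) / 2) * (1 + t) ^ (-μ / 2)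
  have hline := deriv_comp_line_eq (-ε) (differentiableAt_Ker μ ν2 hb ht (hchar b))
  have heq : (fun s => Ker μ ν2 t x s (x + ε * (t - b) + -ε * (s - b))) =ᶠ[𝓝 b]
      fun s => C * (1 + s) ^ (μ / 2) := by
    filter_upwards [lt_mem_nhds hb] with s hs
    rw [show x + ε * (t - b) + -ε * (s - b) = x + ε * (t - s) by ring]
    exact Ker_of_characteristic μ ν2 hs ht (hchar s)
  have hC : HasDerivAt (fun s => C * (1 + s) ^ (μ / 2))
      (C * (1 * (μ / 2) * (1 + b) ^ (μ / 2 - 1))) b :=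
    (((hasDerivAt_id b).const_add 1).rpow_const (Or.inl h1b.ne')).const_mul C
  rw [heq.deriv_eq, hC.deriv, Real.rpow_sub_one h1b.ne', smul_eq_mul] at hline
  linear_combination -2 * hline

end Kernel

theorem kernel_characteristic_b_y_derivatives_general (μ ν2 : ℝ) (t x b : ℝ) (hb : 0 ≤ b) (hbt : b ≤ t) :
    (2 * deriv (fun b' => Ker μ ν2 t x b' (x + (t - b))) b
        - 2 * deriv (fun y' => Ker μ ν2 t x b y') (x + (t - b))
        - μ / (1 + b) * Ker μ ν2 t x b (x + (t - b)) = 0) ∧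
    (2 * deriv (fun b' => Ker μ ν2 t x b' (x - (t - b))) b
        + 2 * deriv (fun y' => Ker μ ν2 t x b y') (x - (t - b))
        - μ / (1 + b) * Ker μ ν2 t x b (x - (t - b)) = 0) := by
  have hb' : -1 < b := by linarith
  have ht : -1 < t := by linarith
  constructor
  · simpa only [one_mul, mul_one] using Ker_transport_eq_zero μ ν2 (x := x) 1 (one_pow 2) hb' ht
  · have h := Ker_transport_eq_zero μ ν2 (x := x) (-1) (by norm_num) hb' ht
    simp only [neg_mul, one_mul, ← sub_eq_add_neg, mul_neg, mul_one, sub_neg_eq_add] at h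
    exact h

theorem kernel_characteristic_b_y_derivatives (μ ν2 : ℝ) (hμ : 0 ≤ μ) (hν : 0 ≤ ν2)
    (hδ : 0 ≤ (μ - 1)^2 - 4*ν2) (t x b : ℝ) (hb : 0 ≤ b) (hbt : b ≤ t) :
    (2 * deriv (fun b' => Ker μ ν2 t x b' (x + (t - b))) b
        - 2 * deriv (fun y' => Ker μ ν2 t x b y') (x + (t - b))
        - μ / (1 + b) * Ker μ ν2 t x b (x + (t - b)) = 0) ∧
    (2 * deriv (fun b' => Ker μ ν2 t x b' (x - (t - b))) b
        + 2 * deriv (fun y' => Ker μ ν2 t x b y') (x - (t - b))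
        - μ / (1 + b) * Ker μ ν2 t x b (x - (t - b)) = 0) :=
  kernel_characteristic_b_y_derivatives_general μ ν2 t x b hb hbt
end
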